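/- arXiv:2109.13849 — 3 statements merged into one kernel-verified Lean document; each statement's English description precedes it below -/
import Mathlib

section
/- Let G = Q₄ₘ = ⟨a, b | a^{2m} = e, a^m = b², b⁻¹ab = a⁻¹⟩ be the dicyclic group of order 4m, and let S ⊆ G \ {e} be inverse-closed with S ∩ (G \ ⟨a⟩) nonempty. If ba^i ∈ S for some i, then (ba^i)⁻¹ = b⁻¹a^i, and consequently the vertices e and b² of Cay(G,S) have the same set of neighbours among {ba^j, b⁻¹a^j : j}. Hence, if S ⊄ ⟨a⟩, then Cay(G,S) has two distinct vertices with identical neighbourhoods outside ⟨a⟩-translates, so Cay(G,S) cannot be a non-trivial bipartite distance-regular graph of diameter 3. -/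
/-!
In `Q₄ₘ` the central involution `b² = a m` is the square of every `b aʲ`, and in any Cayley
graph a vertex `y` is adjacent to `y²` exactly when it is adjacent to `e`. If `⟨a⟩` is a side
of a bipartition, no `aʲ` is a neighbour of `e` or of `b²`, so these two distinct vertices
have the same neighbourhood. In a distance-regular graph with `μ < k` this is impossible:
two such vertices are at distance 2 and would have all `k` neighbours in common.
-/

open QuaternionGroup

/-- The Cayley graph of a group `G` with connection set `S`. -/
def cayleyGraph {G : Type*} [Group G] (S : Set G) : SimpleGraph G where
  Adj x y := x ≠ y ∧ x * y⁻¹ ∈ S ∧ y * x⁻¹ ∈ S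
  symm := ⟨fun x y h => ⟨h.1.symm, h.2.2, h.2.1⟩⟩
  loopless := ⟨fun x h => h.1 rfl⟩

/-- `Γ` is a non-trivial bipartite distance-regular graph of diameter 3 with
intersection array `{k, k−1, k−μ; 1, μ, k}` (so `μ < k − 1`, i.e. non-trivial),
bipartite with part `P`: it is connected, `P` is one side of the bipartition,
the diameter is 3, every vertex has exactly `k` neighbours, and any two vertices at
distance 2 have exactly `μ` common neighbours. -/
def IsNontrivBipDRG3 {V : Type*} (Γ : SimpleGraph V) (P : Set V) (k μ : ℕ) : Prop :=
  Γ.Connected ∧ (∀ u w, Γ.Adj u w → (u ∈ P ↔ w ∉ P)) ∧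
    (∀ u w, Γ.dist u w ≤ 3) ∧ (∃ u w, Γ.dist u w = 3) ∧
    (∀ v, (Γ.neighborSet v).ncard = k) ∧
    (∀ u w, Γ.dist u w = 2 → (Γ.neighborSet u ∩ Γ.neighborSet w).ncard = μ) ∧
    μ + 1 < k

theorem SimpleGraph.dist_eq_two_of_neighborSet_eq {V : Type*} {Γ : SimpleGraph V} {u w v : V}
    (huw : u ≠ w) (hN : Γ.neighborSet u = Γ.neighborSet w) (huv : Γ.Adj u v) :
    Γ.dist u w = 2 := by
  have hvw : Γ.Adj v w := Γ.adj_symm (show v ∈ Γ.neighborSet w from hN ▸ huv)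
  have hle : Γ.dist u w ≤ 2 := by simpa using SimpleGraph.dist_le (huv.toWalk.append hvw.toWalk)
  have hne0 : Γ.dist u w ≠ 0 := (huv.reachable.trans hvw.reachable).dist_eq_zero_iff.not.mpr huw
  have hne1 : Γ.dist u w ≠ 1 := by
    rw [Ne, SimpleGraph.dist_eq_one_iff_adj]
    intro h
    exact Γ.irrefl (show w ∈ Γ.neighborSet w from hN ▸ h)
  omega

theorem IsNontrivBipDRG3.neighborSet_injective {V : Type*} {Γ : SimpleGraph V} {P : Set V}
    {k μ : ℕ} (h : IsNontrivBipDRG3 Γ P k μ) : Function.Injective Γ.neighborSet := by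
  obtain ⟨-, -, -, -, hdeg, hμ, hlt⟩ := h
  intro u w hN
  by_contra huw
  obtain ⟨v, huv⟩ := Set.nonempty_of_ncard_ne_zero (s := Γ.neighborSet u) (by rw [hdeg]; omega)
  have hcommon := hμ u w (SimpleGraph.dist_eq_two_of_neighborSet_eq huw hN huv)
  rw [← hN, Set.inter_self, hdeg] at hcommon
  omega

theorem cayleyGraph_adj_sq_iff {G : Type*} [Group G] (S : Set G) (y : G) :
    (cayleyGraph S).Adj (y ^ 2) y ↔ (cayleyGraph S).Adj 1 y := by
  simp [cayleyGraph, sq, mul_inv_rev, and_comm, eq_comm]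

namespace QuaternionGroup

variable {n : ℕ}

theorem inv_xa (j : ZMod (2 * n)) : (xa j)⁻¹ = xa ((n : ZMod (2 * n)) + j) := rfl

theorem a_natCast_ne_one (hn : n ≠ 0) : a (n : ZMod (2 * n)) ≠ 1 := by
  rw [one_def, Ne, a.injEq, ZMod.natCast_eq_zero_iff]
  exact fun h => hn (Nat.eq_zero_of_dvd_of_lt h (by omega))

theorem cayleyGraph_adj_a_xa_iff (S : Set (QuaternionGroup n)) (j : ZMod (2 * n)) :
    (cayleyGraph S).Adj 1 (xa j) ↔ (cayleyGraph S).Adj (a (n : ZMod (2 * n))) (xa j) := by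
  rw [← xa_sq j, cayleyGraph_adj_sq_iff]

theorem cayleyGraph_neighborSet_one_eq_a {S : Set (QuaternionGroup n)}
    (hbip : ∀ u w, (cayleyGraph S).Adj u w →
      (u ∈ Set.range (a : ZMod (2 * n) → QuaternionGroup n) ↔
        w ∉ Set.range (a : ZMod (2 * n) → QuaternionGroup n))) :
    (cayleyGraph S).neighborSet 1 = (cayleyGraph S).neighborSet (a (n : ZMod (2 * n))) := by
  ext v
  cases v with
  | a j =>
    have hnot : ∀ i, a j ∉ (cayleyGraph S).neighborSet (a i) :=
      fun i h => (hbip _ _ h).mp ⟨i, rfl⟩ ⟨j, rfl⟩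
    rw [one_def]
    exact iff_of_false (hnot 0) (hnot _)
  | xa j => exact cayleyGraph_adj_a_xa_iff S j

end QuaternionGroup

theorem stmt_12_general (m : ℕ) (hm : 1 ≤ m) (S : Set (QuaternionGroup m)) :
    (∀ j : ZMod (2 * m), (xa j)⁻¹ = xa ((m : ZMod (2 * m)) + j)) ∧
    (∀ j : ZMod (2 * m),
      (cayleyGraph S).Adj 1 (xa j) ↔
        (cayleyGraph S).Adj (a (m : ZMod (2 * m))) (xa j)) ∧
    ¬ ∃ k μ : ℕ, IsNontrivBipDRG3 (cayleyGraph S)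
        (Set.range (a : ZMod (2 * m) → QuaternionGroup m)) k μ := by
  refine ⟨inv_xa, cayleyGraph_adj_a_xa_iff S, ?_⟩
  rintro ⟨k, μ, hDRG⟩
  have hN := cayleyGraph_neighborSet_one_eq_a hDRG.2.1
  exact a_natCast_ne_one (by omega) (hDRG.neighborSet_injective hN).symm

/-- in the dicyclic group `Q₄ₘ` (Mathlib's `QuaternionGroup m`, with
`b·aⁱ` written `xa i` and `b² = a m` the central involution), let `S` be inverse-closed
with `1 ∉ S` and `xa i ∈ S` for some `i` (so `S ⊄ ⟨a⟩`). Then `(b aⁱ)⁻¹ = b⁻¹ aⁱ`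
(i.e. `(xa j)⁻¹ = xa (m + j)`), the vertices `e` and `b²` of `Cay(G,S)` have the same
neighbours among the elements `xa j` (outside `⟨a⟩`), and hence `Cay(G,S)` is not a
non-trivial bipartite distance-regular graph of diameter 3 (with `⟨a⟩` as the part of
the bipartition containing the identity). -/
theorem stmt_12 (m : ℕ) (hm : 1 ≤ m) (S : Set (QuaternionGroup m))
    (h1 : (1 : QuaternionGroup m) ∉ S) (hinv : ∀ s ∈ S, s⁻¹ ∈ S)
    (i : ZMod (2 * m)) (hi : xa i ∈ S) :
    (∀ j : ZMod (2 * m), (xa j)⁻¹ = xa ((m : ZMod (2 * m)) + j)) ∧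
    (∀ j : ZMod (2 * m),
      (cayleyGraph S).Adj 1 (xa j) ↔
        (cayleyGraph S).Adj (a (m : ZMod (2 * m))) (xa j)) ∧
    ¬ ∃ k μ : ℕ, IsNontrivBipDRG3 (cayleyGraph S)
        (Set.range (a : ZMod (2 * m) → QuaternionGroup m)) k μ :=
  stmt_12_general m hm S
end

section
/- Let D be a subset of a finite group H of order n with |D| = k, and suppose that in the group ring Z[H] one has D·D⁻¹ = k·e + μ·(H − e) (i.e., D is an (n,k,μ)-difference set). Then also D⁻¹·D = k·e + μ·(H − e) in Z[H]. -/
/-!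
Write `X = k·e + μ·(H - e)`. The augmentation `ℤ[H] → ℤ` turns `D·D⁻¹ = X` into
`k² = k + μ(n - 1)`, and together with `H·H = n·H` this gives `X·(k²·e - μ·H) = (k - μ)k²·e`.
Unless `D` is empty or `k = μ` (which forces `D = H`), `X` is therefore a unit of `ℚ[H]`.
It is central, and `ℚ[H]` is finite-dimensional, hence Dedekind-finite, so the one-sided
inverse `D⁻¹·X⁻¹` of `D` is two-sided; thus `D⁻¹·D = X`.
-/

open MonoidAlgebra Finset

theorem IsUnit.mul_eq_of_commute_of_mul_eq {M : Type*} [Monoid M] [IsDedekindFiniteMonoid M]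
    {a b u : M} (hu : IsUnit u) (hua : Commute u a) (hab : a * b = u) : b * a = u := by
  obtain ⟨w, rfl⟩ := hu
  have hright : a * (b * ↑w⁻¹) = 1 := by rw [← mul_assoc, hab, Units.mul_inv]
  have hleft : b * ↑w⁻¹ * a = 1 := mul_eq_one_comm.mp hright
  calc b * a = b * ↑w⁻¹ * a * w := by
        rw [mul_assoc b, hua.units_inv_left.eq, ← mul_assoc, mul_assoc, Units.inv_mul, mul_one]
    _ = w := by rw [hleft, one_mul]

namespace MonoidAlgebra

theorem mapRingHom_of {R S M : Type*} [Semiring R] [Semiring S] [Monoid M] (f : R →+* S)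
    (g : M) : mapRingHom M f (of R M g) = of S M g := by
  simp [of_apply, mapRingHom_single]

section GroupRing

variable {R H : Type*} [Group H] [Fintype H]

theorem sum_of_mul_of [Semiring R] (g : H) :
    (∑ h : H, of R H h) * of R H g = ∑ h : H, of R H h := by
  simp only [Finset.sum_mul, ← map_mul]
  exact Fintype.sum_equiv (Equiv.mulRight g) _ _ fun _ => rfl

theorem of_mul_sum_of [Semiring R] (g : H) :
    of R H g * (∑ h : H, of R H h) = ∑ h : H, of R H h := by
  simp only [Finset.mul_sum, ← map_mul]
  exact Fintype.sum_equiv (Equiv.mulLeft g) _ _ fun _ => rfl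

theorem sum_of_mul_sum_of [Semiring R] :
    (∑ h : H, of R H h) * (∑ h : H, of R H h) = Fintype.card H • ∑ h : H, of R H h := by
  rw [Finset.mul_sum, Finset.sum_congr rfl fun g _ => sum_of_mul_of g, Finset.sum_const,
    Finset.card_univ]

theorem commute_sum_of [CommSemiring R] (x : MonoidAlgebra R H) :
    Commute (∑ h : H, of R H h) x := by
  induction x using MonoidAlgebra.induction_on with
  | of g => exact (sum_of_mul_of g).trans (of_mul_sum_of g).symm
  | add x y hx hy => exact hx.add_right hy
  | smul r x hx => exact hx.smul_right r

theorem sum_of_inv_univ [Semiring R] : ∑ h : H, of R H h⁻¹ = ∑ h : H, of R H h :=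
  Equiv.sum_comp (Equiv.inv H) (of R H)

theorem card_mul_card_eq_of_sum_mul_sum_inv_eq [CommRing R] {D : Finset H} {μ : ℕ}
    (hD : (∑ d ∈ D, of R H d) * (∑ d ∈ D, of R H d⁻¹) = #D • 1 + μ • ((∑ h : H, of R H h) - 1)) :
    (#D : R) * #D = #D + μ * (Fintype.card H - 1) := by
  simpa using congrArg (lift R R H 1) hD

end GroupRing

section Field

variable {K H : Type*} [Field K] [CharZero K] [Group H] [Fintype H]

theorem isUnit_nsmul_one_add_nsmul_sum_of_sub_one {k μ : ℕ} (hk : k ≠ 0) (hkμ : k ≠ μ)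
    (hcount : (k : K) * k = k + μ * (Fintype.card H - 1)) :
    IsUnit (k • (1 : MonoidAlgebra K H) + μ • ((∑ h : H, of K H h) - 1)) := by
  set S := ∑ h : H, of K H h
  set c : K := (k - μ) * (k * k)
  have hc : c ≠ 0 := mul_ne_zero (sub_ne_zero.mpr (by exact_mod_cast hkμ)) (by positivity)
  have hSS : S * S = (Fintype.card H : K) • S := by
    rw [Nat.cast_smul_eq_nsmul]
    exact sum_of_mul_sum_of
  have hXY : (k • (1 : MonoidAlgebra K H) + μ • (S - 1)) * ((k * k : K) • 1 - (μ : K) • S)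
      = c • 1 := by
    simp only [← Nat.cast_smul_eq_nsmul K, add_mul, sub_mul, mul_sub, smul_mul_smul_comm,
      one_mul, mul_one, hSS]
    linear_combination (norm := module) (μ : K) • hcount • S
  refine IsUnit.of_mul_eq_one (c⁻¹ • ((k * k : K) • 1 - (μ : K) • S)) ?_
  rw [mul_smul_comm, hXY, smul_smul, inv_mul_cancel₀ hc, one_smul]

theorem sum_inv_mul_sum_eq_of_sum_mul_sum_inv_eq {D : Finset H} {μ : ℕ}
    (hD : (∑ d ∈ D, of K H d) * (∑ d ∈ D, of K H d⁻¹) = #D • 1 + μ • ((∑ h : H, of K H h) - 1)) :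
    (∑ d ∈ D, of K H d⁻¹) * (∑ d ∈ D, of K H d) = #D • 1 + μ • ((∑ h : H, of K H h) - 1) := by
  have hcount := card_mul_card_eq_of_sum_mul_sum_inv_eq hD
  rcases D.eq_empty_or_nonempty with rfl | hne
  · simpa using hD
  by_cases hkμ : #D = μ
  · have hD_univ : D = univ := by
      refine D.eq_univ_of_card ?_
      subst hkμ
      have hprod : (#D : K) * (#D - Fintype.card H) = 0 := by linear_combination hcount
      have := (mul_eq_zero.mp hprod).resolve_left (by exact_mod_cast hne.card_pos.ne')
      exact_mod_cast sub_eq_zero.mp this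
    subst hD_univ
    rwa [sum_of_inv_univ] at hD ⊢
  · have hcomm : Commute (#D • (1 : MonoidAlgebra K H) + μ • ((∑ h : H, of K H h) - 1))
        (∑ d ∈ D, of K H d) :=
      ((Commute.one_left _).smul_left _).add_left
        (((commute_sum_of _).sub_left (Commute.one_left _)).smul_left _)
    exact (isUnit_nsmul_one_add_nsmul_sum_of_sub_one hne.card_pos.ne' hkμ hcount)
      |>.mul_eq_of_commute_of_mul_eq hcomm hD

end Field

end MonoidAlgebra

theorem stmt_16_general {H : Type*} [Group H] [Fintype H]
    (D : Finset H) (k μ : ℕ)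
    (hk : D.card = k)
    (hD : (∑ d ∈ D, MonoidAlgebra.of ℤ H d) * (∑ d ∈ D, MonoidAlgebra.of ℤ H d⁻¹)
        = k • MonoidAlgebra.of ℤ H 1
          + μ • ((∑ h : H, MonoidAlgebra.of ℤ H h) - MonoidAlgebra.of ℤ H 1)) :
    (∑ d ∈ D, MonoidAlgebra.of ℤ H d⁻¹) * (∑ d ∈ D, MonoidAlgebra.of ℤ H d)
        = k • MonoidAlgebra.of ℤ H 1
          + μ • ((∑ h : H, MonoidAlgebra.of ℤ H h) - MonoidAlgebra.of ℤ H 1) := by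
  subst hk
  have hinj : Function.Injective (mapRingHom H (Int.castRingHom ℚ)) :=
    map_injective _ Int.cast_injective
  apply hinj
  have hDℚ := congrArg (mapRingHom H (Int.castRingHom ℚ)) hD
  simp only [map_mul, map_add, map_sub, map_sum, map_nsmul, mapRingHom_of, map_one] at hDℚ ⊢
  exact sum_inv_mul_sum_eq_of_sum_mul_sum_inv_eq hDℚ

/-- in the integral group ring `ℤ[H]` of a finite group `H` of order
`n`, if `D · D⁻¹ = k·e + μ·(H − e)` (i.e. `D` is an `(n,k,μ)`-difference set with
`|D| = k`), then also `D⁻¹ · D = k·e + μ·(H − e)`. -/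
theorem stmt_16 {H : Type*} [Group H] [Fintype H] [DecidableEq H]
    (D : Finset H) (n k μ : ℕ)
    (hn : Fintype.card H = n) (hk : D.card = k)
    (hD : (∑ d ∈ D, MonoidAlgebra.of ℤ H d) * (∑ d ∈ D, MonoidAlgebra.of ℤ H d⁻¹)
        = k • MonoidAlgebra.of ℤ H 1
          + μ • ((∑ h : H, MonoidAlgebra.of ℤ H h) - MonoidAlgebra.of ℤ H 1)) :
    (∑ d ∈ D, MonoidAlgebra.of ℤ H d⁻¹) * (∑ d ∈ D, MonoidAlgebra.of ℤ H d)
        = k • MonoidAlgebra.of ℤ H 1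
          + μ • ((∑ h : H, MonoidAlgebra.of ℤ H h) - MonoidAlgebra.of ℤ H 1) :=
  stmt_16_general D k μ hk hD
end

section
/- Let G = H ⋊ ⟨c⟩ with c² = e, let T ⊆ H, and set S' = Tc = {tc : t ∈ T}. Suppose S' is inverse-closed in G. Also let G₀ be a group of order 2|H| containing H as an index-2 subgroup, let a ∈ G₀ \ H, and let S = Ta ⊆ G₀ be inverse-closed in G₀. Then the map φ : G₀ → G defined by φ(h) = h and φ(a⁻¹h) = ch for h ∈ H is a graph isomorphism from Cay(G₀, S) to Cay(G, S'). -/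
/-!
If `K = ι(H) ∪ b⁻¹ι(H)` with `b ∉ ι(H)` and `S = ι(T)b` is inverse-closed, then in `Cay(K, S)`
no two elements of the same coset are adjacent, while `ι h₁ ~ b⁻¹ι h₂` exactly when
`h₁h₂⁻¹ ∈ T`. So `Cay(K, S)` is isomorphic to the Haar graph of `T` on two copies of `H`, a
graph that no longer depends on `K` or `b`. Applying this to `(G₀, a)` and to `(G, c)` (where
`c⁻¹ = c`) and composing one isomorphism with the inverse of the other gives `φ`.
-/

open Function

def haarGraph {H : Type*} [Group H] (T : Set H) : SimpleGraph (H ⊕ H) where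
  Adj
    | .inl h₁, .inr h₂ => h₁ * h₂⁻¹ ∈ T
    | .inr h₁, .inl h₂ => h₂ * h₁⁻¹ ∈ T
    | _, _ => False
  symm := ⟨by rintro (_ | _) (_ | _) h <;> exact h⟩
  loopless := ⟨by rintro (_ | _) h <;> exact h⟩

theorem cayleyGraph_adj_iff_of_inv_mem {K : Type*} [Group K] {S : Set K}
    (hS : ∀ s ∈ S, s⁻¹ ∈ S) {x y : K} :
    (cayleyGraph S).Adj x y ↔ x ≠ y ∧ x * y⁻¹ ∈ S :=
  ⟨fun h => ⟨h.1, h.2.1⟩, fun h => ⟨h.1, h.2, by simpa using hS _ h.2⟩⟩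

section CosetDecomposition

variable {H K : Type*} [Group H] [Group K] {ι : H →* K} {b : K} {T : Set H}

def cosetRep (ι : H →* K) (b : K) : H ⊕ H → K :=
  Sum.elim ι fun h => b⁻¹ * ι h

theorem cosetRep_injective (hι : Injective ι) (hb : b ∉ Set.range ι) :
    Injective (cosetRep ι b) := by
  have disjoint (h₁ h₂ : H) : ι h₁ ≠ b⁻¹ * ι h₂ := fun he =>
    hb ⟨h₂ * h₁⁻¹, by rw [map_mul, map_inv, he]; group⟩
  rintro (h₁ | h₁) (h₂ | h₂) he
  · exact congrArg _ (hι he)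
  · exact absurd he (disjoint h₁ h₂)
  · exact absurd he.symm (disjoint h₂ h₁)
  · exact congrArg _ (hι (mul_left_cancel he))

theorem cosetRep_bijective (hι : Injective ι) (hb : b ∉ Set.range ι)
    (hcover : ∀ g : K, (∃ h, g = ι h) ∨ ∃ h, g = b⁻¹ * ι h) :
    Bijective (cosetRep ι b) := by
  refine ⟨cosetRep_injective hι hb, fun g => ?_⟩
  rcases hcover g with ⟨h, rfl⟩ | ⟨h, rfl⟩
  exacts [⟨.inl h, rfl⟩, ⟨.inr h, rfl⟩]

theorem mul_mem_image_mul_right_iff (hι : Injective ι) (w : H) :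
    ι w * b ∈ (fun t => ι t * b) '' T ↔ w ∈ T :=
  ((mul_left_injective b).comp hι).mem_set_image

theorem notMem_image_mul_right (hb : b ∉ Set.range ι) (w : H) :
    ι w ∉ (fun t => ι t * b) '' T := by
  rintro ⟨t, -, he⟩
  exact hb ⟨t⁻¹ * w, by rw [map_mul, map_inv, ← he]; group⟩

theorem conj_notMem_image_mul_right (hb : b ∉ Set.range ι) (w : H) :
    b⁻¹ * ι w * b ∉ (fun t => ι t * b) '' T := by
  rintro ⟨t, -, he⟩
  have he' : b⁻¹ * ι w = ι t := mul_right_cancel he.symm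
  exact hb ⟨w * t⁻¹, by rw [map_mul, map_inv, ← he']; group⟩

theorem cosetRep_mul_inv_mem_iff (hι : Injective ι) (hb : b ∉ Set.range ι)
    (hS : ∀ s ∈ (fun t => ι t * b) '' T, s⁻¹ ∈ (fun t => ι t * b) '' T) (x y : H ⊕ H) :
    cosetRep ι b x * (cosetRep ι b y)⁻¹ ∈ (fun t => ι t * b) '' T ↔ (haarGraph T).Adj x y := by
  rcases x with h₁ | h₁ <;> rcases y with h₂ | h₂ <;>
    simp only [cosetRep, Sum.elim_inl, Sum.elim_inr]
  · rw [← map_inv, ← map_mul]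
    exact iff_of_false (notMem_image_mul_right hb _) id
  · have e : ι h₁ * (b⁻¹ * ι h₂)⁻¹ = ι (h₁ * h₂⁻¹) * b := by rw [map_mul, map_inv]; group
    rw [e]
    exact mul_mem_image_mul_right_iff hι _
  · have e : b⁻¹ * ι h₁ * (ι h₂)⁻¹ = (ι (h₂ * h₁⁻¹) * b)⁻¹ := by rw [map_mul, map_inv]; group
    rw [e]
    exact ⟨fun h => (mul_mem_image_mul_right_iff (b := b) hι _).1 (by simpa using hS _ h),
      fun h => hS _ ((mul_mem_image_mul_right_iff hι _).2 h)⟩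
  · have e : b⁻¹ * ι h₁ * (b⁻¹ * ι h₂)⁻¹ = b⁻¹ * ι (h₁ * h₂⁻¹) * b := by
      rw [map_mul, map_inv]; group
    rw [e]
    exact iff_of_false (conj_notMem_image_mul_right hb _) id

noncomputable def haarGraphIsoCayleyGraph (hι : Injective ι) (hb : b ∉ Set.range ι)
    (hcover : ∀ g : K, (∃ h, g = ι h) ∨ ∃ h, g = b⁻¹ * ι h)
    (hS : ∀ s ∈ (fun t => ι t * b) '' T, s⁻¹ ∈ (fun t => ι t * b) '' T) :
    haarGraph T ≃g cayleyGraph ((fun t => ι t * b) '' T) where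
  toEquiv := .ofBijective (cosetRep ι b) (cosetRep_bijective hι hb hcover)
  map_rel_iff' {x y} := by
    change (cayleyGraph _).Adj (cosetRep ι b x) (cosetRep ι b y) ↔ _
    rw [cayleyGraph_adj_iff_of_inv_mem hS,
      (cosetRep_injective hι hb).ne_iff, cosetRep_mul_inv_mem_iff hι hb hS]
    exact and_iff_right_of_imp (haarGraph T).ne_of_adj

theorem haarGraphIsoCayleyGraph_symm_cosetRep (hι : Injective ι) (hb : b ∉ Set.range ι)
    (hcover : ∀ g : K, (∃ h, g = ι h) ∨ ∃ h, g = b⁻¹ * ι h)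
    (hS : ∀ s ∈ (fun t => ι t * b) '' T, s⁻¹ ∈ (fun t => ι t * b) '' T) (x : H ⊕ H) :
    (haarGraphIsoCayleyGraph hι hb hcover hS).symm (cosetRep ι b x) = x :=
  (haarGraphIsoCayleyGraph hι hb hcover hS).symm_apply_apply x

end CosetDecomposition

/-- let `G = H ⋊ ⟨c⟩` with `c² = e` (presented abstractly: `ι : H →* G`
injective, `c ∉ ι(H)`, `G = ι(H) ∪ ι(H)c`), let `T ⊆ H` and `S' = Tc` be
inverse-closed in `G`. Let `G₀` contain `H` as an index-2 subgroup (via `ι₀`, with the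
two cosets `ι₀(H)` and `a⁻¹ι₀(H)` for some `a ∉ ι₀(H)`), and let `S = Ta` be
inverse-closed in `G₀`. Then the map `φ` with `φ(h) = h` and `φ(a⁻¹h) = ch` is a graph
isomorphism from `Cay(G₀, S)` to `Cay(G, S')`. -/
theorem stmt_18 {H G G₀ : Type*} [Group H] [Group G] [Group G₀]
    (ι : H →* G) (hι : Function.Injective ι) (c : G) (hc2 : c * c = 1)
    (hc : c ∉ Set.range ι)
    (hgenG : ∀ g : G, (∃ h, g = ι h) ∨ (∃ h, g = c * ι h))
    (ι₀ : H →* G₀) (hι₀ : Function.Injective ι₀) (a : G₀)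
    (ha : a ∉ Set.range ι₀)
    (hgenG₀ : ∀ g : G₀, (∃ h, g = ι₀ h) ∨ (∃ h, g = a⁻¹ * ι₀ h))
    (T : Set H)
    (hS' : ∀ s ∈ (fun t => ι t * c) '' T, s⁻¹ ∈ (fun t => ι t * c) '' T)
    (hS : ∀ s ∈ (fun t => ι₀ t * a) '' T, s⁻¹ ∈ (fun t => ι₀ t * a) '' T) :
    ∃ φ : G₀ → G, (∀ h, φ (ι₀ h) = ι h) ∧ (∀ h, φ (a⁻¹ * ι₀ h) = c * ι h) ∧
      Function.Bijective φ ∧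
      ∀ x y, (cayleyGraph ((fun t => ι₀ t * a) '' T)).Adj x y ↔
        (cayleyGraph ((fun t => ι t * c) '' T)).Adj (φ x) (φ y) := by
  have hcinv : c⁻¹ = c := inv_eq_of_mul_eq_one_left hc2
  have hcoverG : ∀ g : G, (∃ h, g = ι h) ∨ ∃ h, g = c⁻¹ * ι h := by
    simpa only [hcinv] using hgenG
  let e₀ := haarGraphIsoCayleyGraph hι₀ ha hgenG₀ hS
  let e := haarGraphIsoCayleyGraph hι hc hcoverG hS'
  let φ := e₀.symm.trans e
  refine ⟨φ, fun h => ?_, fun h => ?_, φ.bijective,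
    fun x y => (SimpleGraph.Iso.map_adj_iff φ).symm⟩
  · exact congrArg e (haarGraphIsoCayleyGraph_symm_cosetRep hι₀ ha hgenG₀ hS (.inl h))
  · change e (e₀.symm (cosetRep ι₀ a (.inr h))) = c * ι h
    rw [haarGraphIsoCayleyGraph_symm_cosetRep]
    exact congrArg (· * ι h) hcinv
end
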